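/- arXiv:2403.18155 — 3 statements merged into one kernel-verified Lean document; each statement's English description precedes it below -/
import Mathlib

section
/- If u, v ∈ ℝⁿ satisfy uᵀv ≥ 0, then the Euclidean norm of the Hadamard product satisfies ‖u ∘ v‖ ≤ 2^{-3/2} · ‖u + v‖². -/
theorem stmt_3 (n : ℕ) (u v : Fin n → ℝ) (h : 0 ≤ ∑ i, u i * v i) :
    Real.sqrt (∑ i, (u i * v i) ^ 2) ≤
      (2 : ℝ) ^ (-(3 : ℝ) / 2) * (Real.sqrt (∑ i, (u i + v i) ^ 2)) ^ 2 := by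
  set S : ℝ := ∑ i, (u i + v i) ^ 2 with hSdef
  have hS : 0 ≤ S := Finset.sum_nonneg fun i _ => sq_nonneg _
  have hsq : (Real.sqrt S) ^ 2 = S := Real.sq_sqrt hS
  rw [hsq]
  set P : ℝ := ∑ i, max (u i * v i) 0 with hPdef
  set N : ℝ := ∑ i, max (-(u i * v i)) 0 with hNdef
  have hPnn : 0 ≤ P := Finset.sum_nonneg fun i _ => le_max_right _ _
  have hNnn : 0 ≤ N := Finset.sum_nonneg fun i _ => le_max_right _ _
  have hPN : N ≤ P := by
    have : P - N = ∑ i, u i * v i := by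
      rw [hPdef, hNdef, ← Finset.sum_sub_distrib]
      refine Finset.sum_congr rfl fun i _ => ?_
      rcases le_or_gt 0 (u i * v i) with hp | hp
      · rw [max_eq_left hp, max_eq_right (by linarith)]; ring
      · rw [max_eq_right hp.le, max_eq_left (by linarith)]; ring
    linarith [this ▸ h]
  have hSP : 4 * P ≤ S := by
    rw [hPdef, hSdef, Finset.mul_sum]
    refine Finset.sum_le_sum fun i _ => ?_
    rcases le_or_gt 0 (u i * v i) with hp | hp
    · rw [max_eq_left hp]; nlinarith [sq_nonneg (u i - v i)]
    · rw [max_eq_right hp.le]; nlinarith [sq_nonneg (u i + v i)]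
  have hsum : (∑ i, (u i * v i) ^ 2) =
      (∑ i, (max (u i * v i) 0) ^ 2) + (∑ i, (max (-(u i * v i)) 0) ^ 2) := by
    rw [← Finset.sum_add_distrib]
    refine Finset.sum_congr rfl fun i _ => ?_
    rcases le_or_gt 0 (u i * v i) with hp | hp
    · rw [max_eq_left hp, max_eq_right (by linarith)]; ring
    · rw [max_eq_right hp.le, max_eq_left (by linarith)]; ring
  have hP2 : (∑ i, (max (u i * v i) 0) ^ 2) ≤ P ^ 2 :=
    Finset.sum_sq_le_sq_sum_of_nonneg fun i _ => le_max_right _ _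
  have hN2 : (∑ i, (max (-(u i * v i)) 0) ^ 2) ≤ N ^ 2 :=
    Finset.sum_sq_le_sq_sum_of_nonneg fun i _ => le_max_right _ _
  have hkey : (∑ i, (u i * v i) ^ 2) ≤ S ^ 2 / 8 := by
    rw [hsum]; nlinarith
  have h2 : ((2 : ℝ) ^ (-(3 : ℝ) / 2)) ^ 2 = 1 / 8 := by
    rw [← Real.rpow_natCast ((2:ℝ) ^ (-(3:ℝ)/2)) 2, ← Real.rpow_mul (by norm_num),
      show (-(3:ℝ)/2 * (2:ℕ)) = -3 by push_cast; ring, Real.rpow_neg (by norm_num)]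
    norm_num
  have hrhs : 0 ≤ (2 : ℝ) ^ (-(3 : ℝ) / 2) * S :=
    mul_nonneg (Real.rpow_nonneg (by norm_num) _) hS
  rw [show (2 : ℝ) ^ (-(3 : ℝ) / 2) * S = Real.sqrt (((2:ℝ) ^ (-(3:ℝ)/2) * S)^2) from
    (Real.sqrt_sq hrhs).symm]
  apply Real.sqrt_le_sqrt
  rw [mul_pow, h2]
  linarith
end

section
/- Let x, s, ẋ, ṡ, ẍ, s̈, v₁, v₂, e ∈ ℝⁿ and μ, σ ∈ ℝ, and suppose that S ẋ + X ṡ = x ∘ s - σ μ e - S v₁ and S ẍ + X s̈ = -2 ẋ ∘ ṡ - S v₂, where X, S are the diagonal matrices of x, s. Define x(α) = x - ẋ sin(α) + ẍ(1-cos(α)) and s(α) = s - ṡ sin(α) + s̈(1-cos(α)). Then x(α) ∘ s(α) = (1 - sin α)(x ∘ s) + σ μ sin(α) e + (ẍ ∘ s̈ - ẋ ∘ ṡ)(1-cos α)² - (ẋ ∘ s̈ + ẍ ∘ ṡ) sin(α)(1-cos α) + (S v₁) sin(α) - (S v₂)(1-cos α). -/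
theorem stmt_10 (n : ℕ) (x s xd sd xdd sdd v1 v2 : Fin n → ℝ) (μ σ α : ℝ)
    (h1 : ∀ i, s i * xd i + x i * sd i = x i * s i - σ * μ - s i * v1 i)
    (h2 : ∀ i, s i * xdd i + x i * sdd i = -2 * (xd i * sd i) - s i * v2 i) :
    ∀ i,
      (x i - xd i * Real.sin α + xdd i * (1 - Real.cos α)) *
        (s i - sd i * Real.sin α + sdd i * (1 - Real.cos α))
      = (1 - Real.sin α) * (x i * s i) + σ * μ * Real.sin α
        + (xdd i * sdd i - xd i * sd i) * (1 - Real.cos α) ^ 2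
        - (xd i * sdd i + xdd i * sd i) * Real.sin α * (1 - Real.cos α)
        + (s i * v1 i) * Real.sin α - (s i * v2 i) * (1 - Real.cos α) := by
  intro i
  linear_combination (-Real.sin α) * h1 i + (1 - Real.cos α) * h2 i +
    xd i * sd i * Real.sin_sq_add_cos_sq α
end

section
/- Let x, s, ẋ, ṡ, ẍ, s̈ be vectors, define x(α) = x - ẋ sin α + ẍ(1-cos α), s(α) = s - ṡ sin α + s̈(1-cos α), and suppose S ẋ + X ṡ = x∘s - σμe - Sv₁, S ẍ + X s̈ = -2ẋ∘ṡ - Sv₂, ẍᵀs̈ = 0, with μ = xᵀs/n. Then x(α)ᵀ s(α) = xᵀs ((1 - sin α) + σ sin α) - ẋᵀṡ (1-cos α)² - (ẋᵀs̈ + ẍᵀṡ) sin α (1-cos α) + sin α · Σᵢ (Sv₁)ᵢ - (1-cos α) · Σᵢ (Sv₂)ᵢ. -/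
theorem stmt_17 (n : ℕ) (hn : 0 < n) (x s xd sd xdd sdd v1 v2 : Fin n → ℝ)
    (μ σ α : ℝ) (hμ : μ = (∑ i, x i * s i) / n)
    (h1 : ∀ i, s i * xd i + x i * sd i = x i * s i - σ * μ - s i * v1 i)
    (h2 : ∀ i, s i * xdd i + x i * sdd i = -2 * (xd i * sd i) - s i * v2 i)
    (horth : ∑ i, xdd i * sdd i = 0) :
    ∑ i, (x i - xd i * Real.sin α + xdd i * (1 - Real.cos α)) *
          (s i - sd i * Real.sin α + sdd i * (1 - Real.cos α))
      = (∑ i, x i * s i) * ((1 - Real.sin α) + σ * Real.sin α)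
        - (∑ i, xd i * sd i) * (1 - Real.cos α) ^ 2
        - ((∑ i, xd i * sdd i) + ∑ i, xdd i * sd i) * Real.sin α * (1 - Real.cos α)
        + Real.sin α * (∑ i, s i * v1 i)
        - (1 - Real.cos α) * (∑ i, s i * v2 i) := by
  set t := Real.sin α with ht
  set c := 1 - Real.cos α with hc
  have ht2 : t ^ 2 = 2 * c - c ^ 2 := by
    have := Real.sin_sq_add_cos_sq α
    rw [ht, hc]; nlinarith [this]
  have hμn : σ * μ * n = σ * ∑ i, x i * s i := by
    rw [hμ]; field_simp
  have expand : (∑ i, (x i - xd i * t + xdd i * c) * (s i - sd i * t + sdd i * c))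
      = ∑ i, ((1 - t) * (x i * s i) + t * (σ * μ) + t * (s i * v1 i)
          + (t ^ 2 - 2 * c) * (xd i * sd i) - c * (s i * v2 i)
          - t * c * (xd i * sdd i) - t * c * (xdd i * sd i)
          + c ^ 2 * (xdd i * sdd i)) := by
    refine Finset.sum_congr rfl fun i _ => ?_
    linear_combination (-t) * h1 i + c * h2 i
  rw [expand]
  simp only [Finset.sum_add_distrib, Finset.sum_sub_distrib, ← Finset.mul_sum,
    Finset.sum_const, Finset.card_fin, nsmul_eq_mul]
  rw [show t * (σ * ((n:ℝ) * μ)) = t * (σ * μ * n) by ring, hμn, horth, ht2]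
  ring
end
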